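/- Let N ≥ 1, 1 < p < ∞ and q = p/(p−1). Let u ∈ L^p(ℝ^N) be nonnegative, let H_1, …, H_l ⊂ ℝ^N be closed halfspaces each containing 0, and let w ∈ L^q(ℝ^N) be nonnegative, radial and radially nonincreasing. Then ∫_{ℝ^N} u w ≤ ∫_{ℝ^N} ((…(u^{H_1})^{H_2}…)^{H_l}) w, i.e. the integral against w does not decrease under any finite sequence of polarizations by halfspaces containing 0. -/

import Mathlib

/-! Polarization only exchanges the values of `u` at mirror pairs `x ∈ H`, `σ_H x`, putting the
larger one at `x`. Since `0 ∈ H`, the point `x` is closer to the origin than `σ_H x`, so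
`w x ≥ w (σ_H x)`, and the two-term rearrangement inequality shows that the exchange does not
decrease `u x * w x + u (σ_H x) * w (σ_H x)`. Integrating this over the measure-preserving
involution `σ_H` gives `∫ u w ≤ ∫ u^H w`; polarization preserves `L^p`, so by Hölder every
integrand stays integrable and the inequalities chain along the sequence of polarizations. -/

open MeasureTheory Filter

/-- Reflection across the boundary hyperplane `{x : ⟪a,x⟫ = b}` of the closed
halfspace `H = {x : ⟪a,x⟫ ≤ b}` (for `‖a‖ = 1`). -/
noncomputable def reflectH {N : ℕ} (a : EuclideanSpace ℝ (Fin N)) (b : ℝ)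
    (x : EuclideanSpace ℝ (Fin N)) : EuclideanSpace ℝ (Fin N) :=
  x - (2 * ((inner ℝ a x : ℝ) - b)) • a

/-- Polarization (two-point rearrangement) of `u` with respect to the closed halfspace
`H = {x : ⟪a,x⟫ ≤ b}` (for `‖a‖ = 1`). -/
noncomputable def polarization {N : ℕ} (a : EuclideanSpace ℝ (Fin N)) (b : ℝ)
    (u : EuclideanSpace ℝ (Fin N) → ℝ) (x : EuclideanSpace ℝ (Fin N)) : ℝ :=
  if (inner ℝ a x : ℝ) ≤ b then max (u x) (u (reflectH a b x))
  else min (u x) (u (reflectH a b x))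

/-- `polIter a b k u = ((u^{H_0})^{H_1}…)^{H_{k-1}}`: `u` polarized successively with respect
to the halfspaces `H_i = {x : ⟪a i, x⟫ ≤ b i}` for `i = 0, …, k-1`. -/
noncomputable def polIter {N : ℕ} (a : ℕ → EuclideanSpace ℝ (Fin N)) (b : ℕ → ℝ) :
    ℕ → (EuclideanSpace ℝ (Fin N) → ℝ) → EuclideanSpace ℝ (Fin N) → ℝ
  | 0, u => u
  | k + 1, u => polarization (a k) (b k) (polIter a b k u)

open scoped RealInnerProductSpace

section Reflection

variable {N : ℕ} {a : EuclideanSpace ℝ (Fin N)} {b : ℝ}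

lemma inner_reflectH (ha : ‖a‖ = 1) (x : EuclideanSpace ℝ (Fin N)) :
    ⟪a, reflectH a b x⟫ = 2 * b - ⟪a, x⟫ := by
  rw [reflectH, inner_sub_right, real_inner_smul_right, real_inner_self_eq_norm_sq, ha]
  ring

lemma reflectH_reflectH (ha : ‖a‖ = 1) (x : EuclideanSpace ℝ (Fin N)) :
    reflectH a b (reflectH a b x) = x := by
  rw [reflectH, inner_reflectH ha, reflectH]
  module

lemma reflectH_eq_add_reflection (ha : ‖a‖ = 1) (x : EuclideanSpace ℝ (Fin N)) :
    reflectH a b x = (2 * b) • a + (ℝ ∙ a)ᗮ.reflection x := by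
  rw [Submodule.reflection_orthogonal_apply, Submodule.reflection_singleton_apply, ha, reflectH]
  simp only [RCLike.ofReal_one, one_pow, div_one]
  module

lemma measurePreserving_reflectH (ha : ‖a‖ = 1) :
    MeasurePreserving (reflectH a b) volume volume := by
  rw [funext (reflectH_eq_add_reflection ha)]
  exact (measurePreserving_add_left volume _).comp (ℝ ∙ a)ᗮ.reflection.measurePreserving

lemma measurableEmbedding_reflectH (ha : ‖a‖ = 1) : MeasurableEmbedding (reflectH a b) := by
  rw [funext (reflectH_eq_add_reflection ha)]
  exact (MeasurableEquiv.addLeft _).measurableEmbedding.comp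
    (ℝ ∙ a)ᗮ.reflection.toMeasurableEquiv.measurableEmbedding

lemma integral_add_comp_reflectH (ha : ‖a‖ = 1) {f : EuclideanSpace ℝ (Fin N) → ℝ}
    (hf : Integrable f) : ∫ x, (f x + f (reflectH a b x)) = 2 * ∫ x, f x := by
  have hσ := measurePreserving_reflectH (b := b) ha
  have hemb := measurableEmbedding_reflectH (b := b) ha
  rw [integral_add (g := fun x => f (reflectH a b x)) hf ((hσ.integrable_comp_emb hemb).2 hf),
    hσ.integral_comp hemb]
  ring

lemma norm_le_norm_reflectH (ha : ‖a‖ = 1) (hb : 0 ≤ b) {x : EuclideanSpace ℝ (Fin N)}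
    (hx : ⟪a, x⟫ ≤ b) : ‖x‖ ≤ ‖reflectH a b x‖ := by
  have hsq : ‖reflectH a b x‖ ^ 2 = ‖x‖ ^ 2 + 4 * b * (b - ⟪a, x⟫) := by
    rw [reflectH, norm_sub_sq_real, real_inner_smul_right, real_inner_comm, norm_smul, ha,
      Real.norm_eq_abs, mul_one, sq_abs]
    ring
  nlinarith [norm_nonneg x, norm_nonneg (reflectH a b x)]

lemma AntitoneOn.apply_norm_reflectH_le {W : ℝ → ℝ} (hW : AntitoneOn W (Set.Ici 0))
    (ha : ‖a‖ = 1) (hb : 0 ≤ b) {x : EuclideanSpace ℝ (Fin N)} (hx : ⟪a, x⟫ ≤ b) :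
    W ‖reflectH a b x‖ ≤ W ‖x‖ :=
  hW (norm_nonneg _) (norm_nonneg _) (norm_le_norm_reflectH ha hb hx)

end Reflection

section Polarization

variable {N : ℕ} {a : EuclideanSpace ℝ (Fin N)} {b : ℝ} {v : EuclideanSpace ℝ (Fin N) → ℝ}

lemma polarization_of_inner_le {x : EuclideanSpace ℝ (Fin N)} (hx : ⟪a, x⟫ ≤ b) :
    polarization a b v x = max (v x) (v (reflectH a b x)) :=
  if_pos hx

lemma polarization_reflectH_of_inner_le (ha : ‖a‖ = 1) {x : EuclideanSpace ℝ (Fin N)}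
    (hx : ⟪a, x⟫ ≤ b) :
    polarization a b v (reflectH a b x) = min (v x) (v (reflectH a b x)) := by
  by_cases hσx : ⟪a, reflectH a b x⟫ ≤ b
  · -- both `x` and its mirror image lie in `H`, so `x` is on the hyperplane and is fixed
    have hfix : reflectH a b x = x := by
      rw [inner_reflectH ha] at hσx
      rw [reflectH, show ⟪a, x⟫ = b by linarith, sub_self, mul_zero, zero_smul, sub_zero]
    rw [hfix, polarization_of_inner_le hx, hfix, max_self, min_self]
  · rw [polarization, if_neg hσx, reflectH_reflectH ha, min_comm]

lemma memLp_polarization (ha : ‖a‖ = 1) {p : ENNReal} (hv : MemLp v p) :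
    MemLp (polarization a b v) p := by
  have hvσ : MemLp (fun x => v (reflectH a b x)) p :=
    hv.comp_measurePreserving (measurePreserving_reflectH ha)
  have hH : MeasurableSet {x : EuclideanSpace ℝ (Fin N) | ⟪a, x⟫ ≤ b} :=
    measurableSet_le (by fun_prop) measurable_const
  exact MemLp.piecewise (s := {x | ⟪a, x⟫ ≤ b}) hH ((hv.sup hvσ).restrict _)
    ((hv.inf hvσ).restrict _)

lemma add_mul_le_max_mul_add_min_mul {s t α β : ℝ} (h : β ≤ α) :
    s * α + t * β ≤ max s t * α + min s t * β := by
  rcases le_total s t with hst | hst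
  · rw [max_eq_right hst, min_eq_left hst]
    nlinarith
  · rw [max_eq_left hst, min_eq_right hst]

lemma add_mul_le_polarization_mul (ha : ‖a‖ = 1) {w : EuclideanSpace ℝ (Fin N) → ℝ}
    (hw : ∀ x, ⟪a, x⟫ ≤ b → w (reflectH a b x) ≤ w x) (x : EuclideanSpace ℝ (Fin N)) :
    v x * w x + v (reflectH a b x) * w (reflectH a b x) ≤
      polarization a b v x * w x +
        polarization a b v (reflectH a b x) * w (reflectH a b x) := by
  wlog hx : ⟪a, x⟫ ≤ b generalizing x
  · have := this (reflectH a b x) (by rw [inner_reflectH ha]; linarith)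
    rw [reflectH_reflectH ha] at this
    linarith
  rw [polarization_of_inner_le hx, polarization_reflectH_of_inner_le ha hx]
  exact add_mul_le_max_mul_add_min_mul (hw x hx)

theorem integral_mul_le_integral_polarization_mul (ha : ‖a‖ = 1)
    {w : EuclideanSpace ℝ (Fin N) → ℝ} (hw : ∀ x, ⟪a, x⟫ ≤ b → w (reflectH a b x) ≤ w x)
    (hvw : Integrable (fun x => v x * w x))
    (hPw : Integrable (fun x => polarization a b v x * w x)) :
    ∫ x, v x * w x ≤ ∫ x, polarization a b v x * w x := by
  have hdiff : Integrable fun x => polarization a b v x * w x - v x * w x := hPw.sub hvw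
  have hsym : 0 ≤ 2 * ∫ x, (polarization a b v x * w x - v x * w x) := by
    rw [← integral_add_comp_reflectH ha hdiff]
    refine integral_nonneg fun x => ?_
    have := add_mul_le_polarization_mul ha hw (v := v) x
    simp only [Pi.zero_apply]
    linarith
  rw [integral_sub hPw hvw] at hsym
  linarith

end Polarization

lemma integrable_mul_of_memLp_conjExponent {α : Type*} [MeasurableSpace α] {μ : Measure α}
    {p q : ℝ} (hp : 1 < p) (hq : q = p / (p - 1)) {f g : α → ℝ}
    (hf : MemLp f (ENNReal.ofReal p) μ) (hg : MemLp g (ENNReal.ofReal q) μ) :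
    Integrable (fun x => f x * g x) μ :=
  have := ((Real.holderConjugate_iff_eq_conjExponent hp).2 hq).ennrealOfReal
  hf.integrable_mul hg

lemma memLp_polIter {N : ℕ} {a : ℕ → EuclideanSpace ℝ (Fin N)} {b : ℕ → ℝ}
    {u : EuclideanSpace ℝ (Fin N) → ℝ} {p : ENNReal} (hu : MemLp u p) :
    ∀ n, (∀ k < n, ‖a k‖ = 1) → MemLp (polIter a b n u) p
  | 0, _ => hu
  | n + 1, ha => memLp_polarization (ha n n.lt_succ_self)
      (memLp_polIter hu n fun k hk => ha k (hk.trans n.lt_succ_self))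

theorem statement4_general {N : ℕ} (p q : ℝ) (hp : 1 < p) (hq : q = p / (p - 1))
    (u : EuclideanSpace ℝ (Fin N) → ℝ)
    (hu : MemLp u (ENNReal.ofReal p) volume)
    (l : ℕ) (a : ℕ → EuclideanSpace ℝ (Fin N)) (b : ℕ → ℝ)
    (ha : ∀ k < l, ‖a k‖ = 1) (hb : ∀ k < l, 0 ≤ b k)
    (w : EuclideanSpace ℝ (Fin N) → ℝ)
    (hw : MemLp w (ENNReal.ofReal q) volume)
    (W : ℝ → ℝ) (hW : AntitoneOn W (Set.Ici 0)) (hwW : ∀ x, w x = W ‖x‖) :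
    ∫ x, u x * w x ≤ ∫ x, polIter a b l u x * w x := by
  have hint (k : ℕ) (hk : k ≤ l) : Integrable (fun x => polIter a b k u x * w x) :=
    integrable_mul_of_memLp_conjExponent hp hq
      (memLp_polIter hu k fun j hj => ha j (by omega)) hw
  suffices ∀ k ≤ l, ∫ x, u x * w x ≤ ∫ x, polIter a b k u x * w x from this l le_rfl
  intro k hk
  induction k with
  | zero => exact le_rfl
  | succ k ih =>
    have hw_refl (x : EuclideanSpace ℝ (Fin N)) (hx : ⟪a k, x⟫ ≤ b k) :
        w (reflectH (a k) (b k) x) ≤ w x := by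
      rw [hwW, hwW]
      exact hW.apply_norm_reflectH_le (ha k hk) (hb k hk) hx
    exact (ih (by omega)).trans <| integral_mul_le_integral_polarization_mul (ha k hk) hw_refl
      (hint k (by omega)) (hint (k + 1) hk)

/-- For nonnegative `u ∈ L^p(ℝ^N)`, closed halfspaces `H_0, …, H_{l-1}` each
containing `0`, and a nonnegative radial radially nonincreasing `w ∈ L^q(ℝ^N)`
(`q = p/(p-1)`), the integral `∫ u w` does not decrease under the finite sequence of
polarizations: `∫ u w ≤ ∫ ((…(u^{H_0})…)^{H_{l-1}}) w`. -/
theorem statement4 {N : ℕ} (hN : 1 ≤ N) (p q : ℝ) (hp : 1 < p) (hq : q = p / (p - 1))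
    (u : EuclideanSpace ℝ (Fin N) → ℝ)
    (hu : MemLp u (ENNReal.ofReal p) volume) (hu0 : ∀ x, 0 ≤ u x)
    (l : ℕ) (a : ℕ → EuclideanSpace ℝ (Fin N)) (b : ℕ → ℝ)
    (ha : ∀ k < l, ‖a k‖ = 1) (hb : ∀ k < l, 0 ≤ b k)
    (w : EuclideanSpace ℝ (Fin N) → ℝ)
    (hw : MemLp w (ENNReal.ofReal q) volume) (hw0 : ∀ x, 0 ≤ w x)
    (W : ℝ → ℝ) (hW : AntitoneOn W (Set.Ici 0)) (hwW : ∀ x, w x = W ‖x‖) :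
    ∫ x, u x * w x ≤ ∫ x, polIter a b l u x * w x :=
  statement4_general p q hp hq u hu l a b ha hb w hw W hW hwW
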